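/- arXiv:math/0508324 — 3 statements merged into one kernel-verified Lean document; each statement's English description precedes it below -/
import Mathlib

section
/- For every k ≥ 1, the tree-depth of the path P_k on k vertices equals ⌈log₂(k+1)⌉. -/
/-- A rooted forest on vertex set `V`, encoded as a partial order in which
the set of ancestors of any vertex is a chain. `le u v` means `u` is an
ancestor of `v` (or `u = v`). -/
structure RootedForest (V : Type*) where
  le : V → V → Prop
  le_refl : ∀ v, le v v
  le_antisymm : ∀ u v, le u v → le v u → u = v
  le_trans : ∀ u v w, le u v → le v w → le u w
  anc_chain : ∀ u v w, le u w → le v w → le u v ∨ le v u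

/-- The height of a vertex: the number of its ancestors, itself included. -/
noncomputable def RootedForest.vheight {V : Type*} (F : RootedForest V) (x : V) : ℕ :=
  Nat.card {y // F.le y x}

/-- The height of a rooted forest: the maximum height of a vertex. -/
noncomputable def RootedForest.height {V : Type*} (F : RootedForest V) : ℕ :=
  ⨆ x : V, F.vheight x

/-- `G` is a subgraph of the closure of `F`: every edge joins comparable vertices. -/
def RootedForest.Supports {V : Type*} (G : SimpleGraph V) (F : RootedForest V) : Prop :=
  ∀ u v, G.Adj u v → F.le u v ∨ F.le v u

/-- The tree-depth of a graph: minimum height of a rooted forest whose closure contains it. -/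
noncomputable def treeDepth {V : Type*} (G : SimpleGraph V) : ℕ :=
  sInf {n | ∃ F : RootedForest V, RootedForest.Supports G F ∧ F.height ≤ n}

/-!
Upper bound: in the bisection forest on `1, …, k` the ancestors of a vertex have pairwise
distinct 2-adic valuations, each below `⌈log₂(k+1)⌉`. Lower bound: if consecutive vertices of
a path are comparable in a rooted forest, the path has a vertex that is an ancestor of all of
it; removing it leaves a subpath with at least half of the other vertices, and induction yields
a vertex with `⌈log₂(k+1)⌉` ancestors on the path.
-/

open Finset

theorem Nat.div_eq_div_of_dvd_of_div_eq {x y m n : ℕ} (hmn : m ∣ n) (h : x / m = y / m) :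
    x / n = y / n := by
  obtain ⟨d, rfl⟩ := hmn
  rw [← Nat.div_div_eq_div_mul, ← Nat.div_div_eq_div_mul, h]

theorem Nat.mod_two_pow_padicValNat_succ {a : ℕ} (ha : a ≠ 0) :
    a % 2 ^ (padicValNat 2 a + 1) = 2 ^ padicValNat 2 a := by
  obtain ⟨c, hc⟩ := pow_padicValNat_dvd (p := 2) (n := a)
  have hodd : c % 2 = 1 := by
    by_contra hc2
    obtain ⟨d, rfl⟩ : 2 ∣ c := by omega
    exact pow_succ_padicValNat_not_dvd ha ⟨d, by rw [pow_succ, mul_assoc]; exact hc⟩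
  calc a % 2 ^ (padicValNat 2 a + 1)
      = 2 ^ padicValNat 2 a * c % (2 ^ padicValNat 2 a * 2) := by rw [← pow_succ, ← hc]
    _ = 2 ^ padicValNat 2 a := by rw [Nat.mul_mod_mul_left, hodd, mul_one]

theorem Nat.succ_div_two_pow_of_padicValNat_le {a w : ℕ} (h : padicValNat 2 (a + 1) ≤ w) :
    (a + 1) / 2 ^ (w + 1) = a / 2 ^ (w + 1) :=
  Nat.succ_div_of_not_dvd fun hdvd =>
    absurd ((padicValNat_dvd_iff_le (by omega : a + 1 ≠ 0)).mp hdvd) (by omega)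

theorem padicValNat_lt_clog_of_le {a k : ℕ} (ha : a ≠ 0) (hak : a ≤ k) :
    padicValNat 2 a < Nat.clog 2 (k + 1) := by
  have hpow : 2 ^ padicValNat 2 a ≤ a :=
    Nat.le_of_dvd (Nat.pos_of_ne_zero ha) pow_padicValNat_dvd
  have hclog : k + 1 ≤ 2 ^ Nat.clog 2 (k + 1) := Nat.le_pow_clog one_lt_two _
  exact (Nat.pow_lt_pow_iff_right one_lt_two).mp (by omega)

/-- The bisection forest on the positive integers: the subtree of `a = 2 ^ v * (2 * m + 1)`
is the open interval `(2 ^ (v + 1) * m, 2 ^ (v + 1) * (m + 1))`, whose midpoint is `a`. -/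
def rulerLE (a b : ℕ) : Prop :=
  padicValNat 2 b ≤ padicValNat 2 a ∧
    b / 2 ^ (padicValNat 2 a + 1) = a / 2 ^ (padicValNat 2 a + 1)

theorem rulerLE_refl (a : ℕ) : rulerLE a a := ⟨le_rfl, rfl⟩

theorem rulerLE_trans {a b c : ℕ} (hab : rulerLE a b) (hbc : rulerLE b c) : rulerLE a c :=
  ⟨hbc.1.trans hab.1,
    (Nat.div_eq_div_of_dvd_of_div_eq (pow_dvd_pow 2 (Nat.succ_le_succ hab.1)) hbc.2).trans hab.2⟩

theorem rulerLE_of_rulerLE_of_padicValNat_le {a b c : ℕ} (hac : rulerLE a c)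
    (hbc : rulerLE b c) (hba : padicValNat 2 b ≤ padicValNat 2 a) : rulerLE a b :=
  ⟨hba,
    (Nat.div_eq_div_of_dvd_of_div_eq (pow_dvd_pow 2 (Nat.succ_le_succ hba)) hbc.2).symm.trans
      hac.2⟩

theorem eq_of_rulerLE_of_padicValNat_eq {a b : ℕ} (ha : a ≠ 0) (hb : b ≠ 0)
    (hab : rulerLE a b) (hv : padicValNat 2 a = padicValNat 2 b) : a = b := by
  rw [← Nat.div_add_mod a (2 ^ (padicValNat 2 a + 1)),
    ← Nat.div_add_mod b (2 ^ (padicValNat 2 a + 1)), hab.2, Nat.mod_two_pow_padicValNat_succ ha,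
    hv, Nat.mod_two_pow_padicValNat_succ hb]

theorem rulerLE_antisymm {a b : ℕ} (ha : a ≠ 0) (hb : b ≠ 0) (hab : rulerLE a b)
    (hba : rulerLE b a) : a = b :=
  eq_of_rulerLE_of_padicValNat_eq ha hb hab (le_antisymm hba.1 hab.1)

theorem rulerLE_succ_or_succ_rulerLE (a : ℕ) : rulerLE a (a + 1) ∨ rulerLE (a + 1) a := by
  rcases le_total (padicValNat 2 (a + 1)) (padicValNat 2 a) with h | h
  · exact .inl ⟨h, Nat.succ_div_two_pow_of_padicValNat_le h⟩
  · exact .inr ⟨h, (Nat.succ_div_two_pow_of_padicValNat_le le_rfl).symm⟩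

def rulerForest (k : ℕ) : RootedForest (Fin k) where
  le x y := rulerLE (x + 1) (y + 1)
  le_refl _ := rulerLE_refl _
  le_antisymm _ _ hxy hyx :=
    Fin.ext (Nat.add_right_cancel (rulerLE_antisymm (by omega) (by omega) hxy hyx))
  le_trans _ _ _ := rulerLE_trans
  anc_chain x y _ hxz hyz := by
    rcases le_total (padicValNat 2 (y + 1)) (padicValNat 2 (x + 1)) with h | h
    · exact .inl (rulerLE_of_rulerLE_of_padicValNat_le hxz hyz h)
    · exact .inr (rulerLE_of_rulerLE_of_padicValNat_le hyz hxz h)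

theorem rulerForest_supports (k : ℕ) :
    RootedForest.Supports (SimpleGraph.pathGraph k) (rulerForest k) := by
  intro x y hxy
  rcases SimpleGraph.pathGraph_adj.mp hxy with h | h
  · simpa only [rulerForest, ← h] using rulerLE_succ_or_succ_rulerLE (x + 1)
  · simpa only [rulerForest, ← h, or_comm] using rulerLE_succ_or_succ_rulerLE (y + 1)

theorem rulerForest_vheight_le (k : ℕ) (x : Fin k) :
    (rulerForest k).vheight x ≤ Nat.clog 2 (k + 1) := by
  let level (y : {y // (rulerForest k).le y x}) : Fin (Nat.clog 2 (k + 1)) :=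
    ⟨padicValNat 2 (y.1 + 1), padicValNat_lt_clog_of_le (by omega) y.1.2⟩
  have hlevel : Function.Injective level := by
    rintro ⟨y, hy⟩ ⟨z, hz⟩ hyz
    have hv : padicValNat 2 (y + 1) = padicValNat 2 (z + 1) := congrArg Fin.val hyz
    have hyz' := rulerLE_of_rulerLE_of_padicValNat_le hy hz hv.ge
    exact Subtype.ext (Fin.ext (Nat.add_right_cancel
      (eq_of_rulerLE_of_padicValNat_eq (by omega) (by omega) hyz' hv)))
  exact (Nat.card_le_card_of_injective level hlevel).trans_eq (Nat.card_fin _)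

theorem rulerForest_height_le (k : ℕ) : (rulerForest k).height ≤ Nat.clog 2 (k + 1) :=
  ciSup_le' (rulerForest_vheight_le k)

theorem Nat.clog_two_succ_le_clog_two_succ_add_one {n a : ℕ} (h : n ≤ 2 * a + 1) :
    Nat.clog 2 (n + 1) ≤ Nat.clog 2 (a + 1) + 1 := by
  rcases Nat.eq_zero_or_pos n with rfl | hn
  · simp [Nat.clog_one_right]
  rw [Nat.clog_of_two_le one_lt_two (by omega)]
  exact Nat.succ_le_succ (Nat.clog_mono_right 2 (by omega))

theorem Nat.iff_of_forall_iff_succ {P : ℕ → Prop} {lo hi : ℕ}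
    (h : ∀ i, lo ≤ i → i + 1 < hi → (P i ↔ P (i + 1))) {s t : ℕ} (hs : s ∈ Ico lo hi)
    (ht : t ∈ Ico lo hi) : P s ↔ P t := by
  suffices hlo : ∀ t ∈ Ico lo hi, P lo ↔ P t from (hlo s hs).symm.trans (hlo t ht)
  intro t ht
  rw [mem_Ico] at ht
  induction t, ht.1 using Nat.le_induction with
  | base => rfl
  | succ n hn ih => exact (ih ⟨hn, by omega⟩).trans (h n hn ht.2)

namespace RootedForest

variable {V : Type*} (F : RootedForest V)

theorem le_or_le_of_le_of_le_or_le {r x y : V} (hrx : F.le r x) (hxy : F.le x y ∨ F.le y x) :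
    F.le r y ∨ F.le y r :=
  hxy.elim (fun h => .inl (F.le_trans _ _ _ hrx h)) (F.anc_chain _ _ _ hrx)

variable (p : ℕ → V)

def IsComparablePath (lo hi : ℕ) : Prop :=
  ∀ i, lo ≤ i → i + 1 < hi → F.le (p i) (p (i + 1)) ∨ F.le (p (i + 1)) (p i)

open scoped Classical in
noncomputable def ancestorsIn (s : Finset ℕ) (i : ℕ) : Finset ℕ :=
  {t ∈ s | F.le (p t) (p i)}

variable {F p}

@[simp]
theorem mem_ancestorsIn {s : Finset ℕ} {i t : ℕ} :
    t ∈ F.ancestorsIn p s i ↔ t ∈ s ∧ F.le (p t) (p i) := by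
  simp only [ancestorsIn, mem_filter]

theorem card_ancestorsIn_lt {s s' : Finset ℕ} {i i' j : ℕ} (hs : s ⊆ s')
    (hii' : F.le (p i) (p i')) (hj : j ∈ F.ancestorsIn p s' i')
    (hj' : j ∉ F.ancestorsIn p s i) :
    #(F.ancestorsIn p s i) < #(F.ancestorsIn p s' i') := by
  refine card_lt_card ((ssubset_iff_of_subset fun t ht => ?_).mpr ⟨j, hj, hj'⟩)
  rw [mem_ancestorsIn] at ht ⊢
  exact ⟨hs ht.1, F.le_trans _ _ _ ht.2 hii'⟩

theorem card_ancestorsIn_le_vheight [Finite V] {s : Finset ℕ} (hinj : Set.InjOn p s) (i : ℕ) :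
    #(F.ancestorsIn p s i) ≤ F.vheight (p i) := by
  let f (t : F.ancestorsIn p s i) : {y // F.le y (p i)} := ⟨p t, (mem_ancestorsIn.mp t.2).2⟩
  have hf : Function.Injective f := fun t t' h => Subtype.ext <|
    hinj (mem_ancestorsIn.mp t.2).1 (mem_ancestorsIn.mp t'.2).1 (congrArg Subtype.val h)
  exact (Nat.card_eq_finsetCard _).symm.trans_le (Nat.card_le_card_of_injective f hf)

namespace IsComparablePath

variable {lo hi : ℕ}

theorem mono (hp : F.IsComparablePath p lo hi) {lo' hi' : ℕ} (hlo : lo ≤ lo')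
    (hhi : hi' ≤ hi) :
    F.IsComparablePath p lo' hi' :=
  fun i hi₁ hi₂ => hp i (by omega) (by omega)

/-- A vertex `j` with fewest ancestors on the path is an ancestor of every vertex comparable
with it, so being a descendant of `j` propagates along the path. -/
theorem exists_forall_le (hp : F.IsComparablePath p lo hi) (hlt : lo < hi) :
    ∃ j ∈ Ico lo hi, ∀ t ∈ Ico lo hi, F.le (p j) (p t) := by
  obtain ⟨j, hj, hmin⟩ :=
    (Ico lo hi).exists_min_image (fun i => #(F.ancestorsIn p (Ico lo hi) i)) (nonempty_Ico.mpr hlt)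
  have hroot : ∀ t ∈ Ico lo hi, F.le (p j) (p t) ∨ F.le (p t) (p j) → F.le (p j) (p t) := by
    rintro t ht (h | h)
    · exact h
    by_contra hjt
    refine (hmin t ht).not_gt (card_ancestorsIn_lt (j := j) subset_rfl h ?_ ?_)
    · exact mem_ancestorsIn.mpr ⟨hj, F.le_refl _⟩
    · exact fun h' => hjt (mem_ancestorsIn.mp h').2
  refine ⟨j, hj, fun t ht => ?_⟩
  refine (Nat.iff_of_forall_iff_succ (P := fun t => F.le (p j) (p t)) (fun i hlo hhi => ?_)
    hj ht).mp (F.le_refl _)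
  have hcomp := hp i hlo hhi
  constructor
  · intro h
    exact hroot _ (mem_Ico.mpr ⟨by omega, hhi⟩) (F.le_or_le_of_le_of_le_or_le h hcomp)
  · intro h
    exact hroot _ (mem_Ico.mpr ⟨hlo, by omega⟩) (F.le_or_le_of_le_of_le_or_le h hcomp.symm)

theorem exists_clog_le_card_ancestorsIn (hp : F.IsComparablePath p lo hi) (hlt : lo < hi) :
    ∃ i ∈ Ico lo hi, Nat.clog 2 (hi - lo + 1) ≤ #(F.ancestorsIn p (Ico lo hi) i) := by
  induction hn : hi - lo using Nat.strong_induction_on generalizing lo hi with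
  | _ n ih =>
  obtain ⟨j, hj, hroot⟩ := hp.exists_forall_le hlt
  have hjj : j ∈ F.ancestorsIn p (Ico lo hi) j := mem_ancestorsIn.mpr ⟨hj, F.le_refl _⟩
  rw [mem_Ico] at hj
  by_cases hn1 : n = 1
  · refine ⟨j, mem_Ico.mpr hj, ?_⟩
    calc Nat.clog 2 (n + 1) ≤ Nat.clog 2 (0 + 1) + 1 :=
          Nat.clog_two_succ_le_clog_two_succ_add_one (by omega)
      _ ≤ #(F.ancestorsIn p (Ico lo hi) j) := by
          simpa [Nat.clog_one_right] using card_pos.mpr ⟨j, hjj⟩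
  -- the longer of the two pieces `[lo, j)` and `[j + 1, hi)` left after removing the root
  obtain ⟨lo', hi', hlo, hhi, hj', hhalf, hlt'⟩ : ∃ lo' hi', lo ≤ lo' ∧ hi' ≤ hi ∧
      (j < lo' ∨ hi' ≤ j) ∧ n ≤ 2 * (hi' - lo') + 1 ∧ lo' < hi' := by
    rcases le_total (j - lo) (hi - (j + 1)) with h | h
    · exact ⟨j + 1, hi, by omega, le_rfl, by omega, by omega, by omega⟩
    · exact ⟨lo, j, le_rfl, by omega, by omega, by omega, by omega⟩
  obtain ⟨i, hi_mem, hi_bound⟩ := ih (hi' - lo') (by omega) (hp.mono hlo hhi) hlt' rfl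
  have hsub : Ico lo' hi' ⊆ Ico lo hi := Ico_subset_Ico hlo hhi
  have hj_anc : j ∈ F.ancestorsIn p (Ico lo hi) i :=
    mem_ancestorsIn.mpr ⟨mem_Ico.mpr hj, hroot i (hsub hi_mem)⟩
  have hj_not_anc : j ∉ F.ancestorsIn p (Ico lo' hi') i := fun h => by
    have := mem_Ico.mp (mem_ancestorsIn.mp h).1
    omega
  refine ⟨i, hsub hi_mem, ?_⟩
  calc Nat.clog 2 (n + 1) ≤ Nat.clog 2 (hi' - lo' + 1) + 1 :=
        Nat.clog_two_succ_le_clog_two_succ_add_one hhalf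
    _ ≤ #(F.ancestorsIn p (Ico lo' hi') i) + 1 := by omega
    _ ≤ #(F.ancestorsIn p (Ico lo hi) i) :=
        card_ancestorsIn_lt hsub (F.le_refl _) hj_anc hj_not_anc

theorem exists_clog_le_vheight [Finite V] (hp : F.IsComparablePath p lo hi)
    (hinj : Set.InjOn p (Set.Ico lo hi)) (hlt : lo < hi) :
    ∃ i ∈ Ico lo hi, Nat.clog 2 (hi - lo + 1) ≤ F.vheight (p i) := by
  obtain ⟨i, hi_mem, hi_bound⟩ := hp.exists_clog_le_card_ancestorsIn hlt
  exact ⟨i, hi_mem, hi_bound.trans (card_ancestorsIn_le_vheight (by rwa [coe_Ico]) i)⟩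

end IsComparablePath

end RootedForest

theorem clog_le_height_of_supports_pathGraph {k : ℕ} {F : RootedForest (Fin k)}
    (hF : RootedForest.Supports (SimpleGraph.pathGraph k) F) :
    Nat.clog 2 (k + 1) ≤ F.height := by
  obtain _ | m := k
  · simp [Nat.clog_one_right]
  have hval {i : ℕ} (hi : i < m + 1) : (Fin.ofNat (m + 1) i : ℕ) = i := by
    rw [Fin.val_ofNat, Nat.mod_eq_of_lt hi]
  have hp : F.IsComparablePath (Fin.ofNat (m + 1)) 0 (m + 1) := fun i _ hi =>
    hF _ _ (SimpleGraph.pathGraph_adj.mpr (.inl (by rw [hval (by omega), hval hi])))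
  have hinj : Set.InjOn (Fin.ofNat (m + 1)) (Set.Ico 0 (m + 1)) := fun a ha b hb hab => by
    simpa only [hval ha.2, hval hb.2] using congrArg Fin.val hab
  obtain ⟨i, -, hi⟩ := hp.exists_clog_le_vheight hinj (Nat.succ_pos m)
  exact hi.trans (le_ciSup (Set.finite_range _).bddAbove _)

theorem treeDepth_pathGraph_general (k : ℕ) :
    treeDepth (SimpleGraph.pathGraph k) = Nat.clog 2 (k + 1) := by
  have hmem : Nat.clog 2 (k + 1) ∈
      {n | ∃ F : RootedForest (Fin k), RootedForest.Supports (SimpleGraph.pathGraph k) F ∧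
        F.height ≤ n} :=
    ⟨rulerForest k, rulerForest_supports k, rulerForest_height_le k⟩
  obtain ⟨F, hF, hheight⟩ := Nat.sInf_mem ⟨_, hmem⟩
  exact le_antisymm (Nat.sInf_le hmem) ((clog_le_height_of_supports_pathGraph hF).trans hheight)

theorem treeDepth_pathGraph (k : ℕ) (hk : 1 ≤ k) :
    treeDepth (SimpleGraph.pathGraph k) = Nat.clog 2 (k + 1) :=
  treeDepth_pathGraph_general k
end

section
/- Let G be a graph whose longest path has k vertices. Then ⌈log₂(k+1)⌉ ≤ td(G) ≤ C(k+2, 2) − 1. -/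
/-!
In a rooted forest whose closure contains a path on `n` vertices, a vertex of the path of minimal
depth is an ancestor of all the others; deleting it leaves two subpaths on each of which every
vertex has one ancestor fewer, so `n < 2 ^ height` by induction. Conversely, in a depth-first
search forest every edge joins a vertex to an ancestor and the ancestors of a vertex form a path
of `G`, so its height is at most the number `k` of vertices of a longest path, and
`k ≤ (k + 2).choose 2 - 1`.
-/

theorem List.finite_setOf_mem_and {V : Type*} (l : List V) (p : V → Prop) :
    {y | y ∈ l ∧ p y}.Finite :=
  l.finite_toSet.subset fun _ hy => hy.1

namespace RootedForest

variable {V : Type*} (F : RootedForest V)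

def Comparable (x y : V) : Prop :=
  F.le x y ∨ F.le y x

variable {F}

theorem Comparable.symm {x y : V} (h : F.Comparable x y) : F.Comparable y x :=
  Or.symm h

theorem le_of_comparable {r x y : V} (hxy : F.Comparable x y) (hry : F.le r y)
    (hmin : F.le x r → x = r) : F.le r x := by
  rcases hxy with hxy | hyx
  · rcases F.anc_chain r x y hry hxy with hrx | hxr
    · exact hrx
    · exact hmin hxr ▸ F.le_refl r
  · exact F.le_trans r y x hry hyx

theorem le_of_mem_of_isChain {r : V} {l : List V} (hc : l.IsChain F.Comparable) (hr : r ∈ l)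
    (hmin : ∀ y ∈ l, F.le y r → y = r) : ∀ y ∈ l, F.le r y := by
  have hc' : l.IsChain fun x y => (F.le x r → x = r) ∧ (F.le y r → y = r) ∧ F.Comparable x y :=
    hc.imp_of_mem_imp fun x y hx hy h => ⟨hmin x hx, hmin y hy, h⟩
  obtain ⟨l₁, l₂, rfl⟩ := List.append_of_mem hr
  have hfwd : ∀ y ∈ l₂, F.le r y :=
    hc'.right_of_append.cons_induction _ _ (fun _ _ ⟨_, hy, hxy⟩ hrx =>
      le_of_comparable hxy.symm hrx hy) (F.le_refl r)
  have hbwd : ∀ y ∈ l₁, F.le r y := by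
    rw [List.append_cons] at hc'
    exact hc'.left_of_append.backwards_concat_induction _ _ (fun _ _ ⟨hx, _, hxy⟩ hry =>
      le_of_comparable hxy hry hx) (F.le_refl r)
  intro y hy
  obtain hy | rfl | hy : y ∈ l₁ ∨ y = r ∨ y ∈ l₂ := by simpa using hy
  · exact hbwd y hy
  · exact F.le_refl y
  · exact hfwd y hy

/-- Ancestors are counted among the vertices of `l` only, so that the induction never has to
restrict the forest. -/
theorem length_lt_two_pow_of_isChain (h : ℕ) {l : List V} (hl : l.Nodup)
    (hc : l.IsChain F.Comparable) (hh : ∀ x ∈ l, {y | y ∈ l ∧ F.le y x}.ncard ≤ h) :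
    l.length < 2 ^ h := by
  induction h generalizing l with
  | zero =>
    match l, hh with
    | [], _ => simp
    | x :: l, hh =>
      have hpos := (Set.ncard_pos ((x :: l).finite_setOf_mem_and (F.le · x))).2
        ⟨x, List.mem_cons_self, F.le_refl x⟩
      exact absurd (hh x List.mem_cons_self) (by omega)
  | succ h ih =>
    by_cases hne : l = []
    · simp [hne]
    obtain ⟨r, hr, hrmin⟩ := Set.exists_min_image {x | x ∈ l}
      (fun x => {y | y ∈ l ∧ F.le y x}.ncard) l.finite_toSet (List.exists_mem_of_ne_nil l hne)
    have hmin : ∀ y ∈ l, F.le y r → y = r := by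
      refine fun y hy hyr => by_contra fun hyr' => (hrmin y hy).not_gt ?_
      refine Set.ncard_lt_ncard ?_ (l.finite_setOf_mem_and _)
      refine (Set.ssubset_iff_of_subset ?_).2
        ⟨r, ⟨hr, F.le_refl r⟩, fun hry => hyr' (F.le_antisymm _ _ hyr hry.2)⟩
      exact fun z hz => ⟨hz.1, F.le_trans _ _ _ hz.2 hyr⟩
    have hroot := le_of_mem_of_isChain hc hr hmin
    have hside : ∀ l' : List V, l'.Nodup → l'.IsChain F.Comparable → (∀ y ∈ l', y ∈ l) →
        r ∉ l' → l'.length < 2 ^ h := by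
      refine fun l' hl' hc' hsub hr' => ih hl' hc' fun x hx => ?_
      have hlt : {y | y ∈ l' ∧ F.le y x}.ncard < {y | y ∈ l ∧ F.le y x}.ncard := by
        refine Set.ncard_lt_ncard ?_ (l.finite_setOf_mem_and _)
        refine (Set.ssubset_iff_of_subset ?_).2 ⟨r, ⟨hr, hroot x (hsub x hx)⟩, fun h => hr' h.1⟩
        exact fun y hy => ⟨hsub y hy.1, hy.2⟩
      have := hh x (hsub x hx)
      omega
    obtain ⟨l₁, l₂, rfl⟩ := List.append_of_mem hr
    obtain ⟨hr₁₂, hl₁₂⟩ := List.nodup_cons.1 (List.nodup_middle.1 hl)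
    obtain ⟨hl₁, hl₂, -⟩ := List.nodup_append.1 hl₁₂
    have h₁ := hside l₁ hl₁ hc.left_of_append (by simp +contextual) (by simp_all)
    have h₂ := hside l₂ hl₂ hc.right_of_append.tail (by simp +contextual) (by simp_all)
    simp only [List.length_append, List.length_cons, pow_succ]
    omega

theorem vheight_le_height [Finite V] (F : RootedForest V) (x : V) : F.vheight x ≤ F.height :=
  le_ciSup (Set.finite_range _).bddAbove x

theorem length_lt_two_pow_height [Finite V] {l : List V} (hl : l.Nodup)
    (hc : l.IsChain F.Comparable) : l.length < 2 ^ F.height :=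
  length_lt_two_pow_of_isChain _ hl hc fun x _ =>
    calc {y | y ∈ l ∧ F.le y x}.ncard ≤ {y | F.le y x}.ncard := Set.ncard_le_ncard fun _ hy => hy.2
      _ = F.vheight x := (Nat.card_coe_set_eq _).symm
      _ ≤ F.height := F.vheight_le_height x

def ofChains (c : V → List V) (getLast?_eq : ∀ x, (c x).getLast? = some x)
    (isPrefix : ∀ x y, y ∈ c x → c y <+: c x) : RootedForest V where
  le y x := y ∈ c x
  le_refl x := List.mem_of_getLast? (getLast?_eq x)
  le_antisymm x y hxy hyx := by
    have := (isPrefix y x hxy).eq_of_length_le (isPrefix x y hyx).length_le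
    exact Option.some_injective _ <| by rw [← getLast?_eq, this, getLast?_eq]
  le_trans x y z hxy hyz := (isPrefix z y hyz).mem hxy
  anc_chain x y z hxz hyz := by
    rcases List.prefix_or_prefix_of_prefix (isPrefix z x hxz) (isPrefix z y hyz) with h | h
    · exact Or.inl (h.mem (List.mem_of_getLast? (getLast?_eq x)))
    · exact Or.inr (h.mem (List.mem_of_getLast? (getLast?_eq y)))

theorem vheight_ofChains_le (c : V → List V) (h₁ h₂) (x : V) :
    (ofChains c h₁ h₂).vheight x ≤ (c x).length := by
  classical
  change Nat.card ({y | y ∈ c x} : Set V) ≤ _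
  rw [Nat.card_coe_set_eq, ← List.coe_toFinset, Set.ncard_coe_finset]
  exact List.toFinset_card_le _

end RootedForest

namespace SimpleGraph
variable {V : Type*} (G : SimpleGraph V)

def ReachableIn (U : Set V) (a b : V) : Prop :=
  ∃ W : G.Walk a b, ∀ x ∈ W.support, x ∈ U

section ReachableIn
variable {G} {U : Set V} {a b c v x : V}

theorem ReachableIn.refl (ha : a ∈ U) : G.ReachableIn U a a :=
  ⟨.nil, by simpa using ha⟩

theorem ReachableIn.mem_left (h : G.ReachableIn U a b) : a ∈ U :=
  h.elim fun W hW => hW a W.start_mem_support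

theorem ReachableIn.mem_right (h : G.ReachableIn U a b) : b ∈ U :=
  h.elim fun W hW => hW b W.end_mem_support

theorem ReachableIn.trans (hab : G.ReachableIn U a b) (hbc : G.ReachableIn U b c) :
    G.ReachableIn U a c := by
  obtain ⟨W₁, h₁⟩ := hab
  obtain ⟨W₂, h₂⟩ := hbc
  exact ⟨W₁.append W₂, fun x hx => ((Walk.mem_support_append_iff _ _).1 hx).elim (h₁ x) (h₂ x)⟩

theorem Adj.reachableIn (hab : G.Adj a b) (ha : a ∈ U) (hb : b ∈ U) : G.ReachableIn U a b :=
  ⟨hab.toWalk, by simp [ha, hb]⟩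

theorem reachableIn_of_mem_support (W : G.Walk a b) (hW : ∀ x ∈ W.support, x ∈ U)
    (hc : c ∈ W.support) : G.ReachableIn U a c ∧ G.ReachableIn U c b := by
  classical
  exact ⟨⟨W.takeUntil c hc, fun x hx => hW x (W.support_takeUntil_subset_support hc hx)⟩,
    ⟨W.dropUntil c hc, fun x hx => hW x (W.support_dropUntil_subset_support hc hx)⟩⟩

theorem ReachableIn.diff_of_not_reachableIn (h : G.ReachableIn U a x)
    (hx : ¬ G.ReachableIn U v x) : G.ReachableIn (U \ {y | G.ReachableIn U v y}) a x := by
  obtain ⟨W, hW⟩ := h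
  exact ⟨W, fun y hy => ⟨hW y hy, fun hvy => hx (hvy.trans (reachableIn_of_mem_support W hW hy).2)⟩⟩

theorem ReachableIn.exists_adj_reachableIn_diff (h : G.ReachableIn U v x) (hx : x ≠ v) :
    ∃ w, G.Adj v w ∧ G.ReachableIn ({y | G.ReachableIn U v y} \ {v}) w x := by
  classical
  obtain ⟨W, hW⟩ := h
  have hP : ∀ y ∈ W.bypass.support, y ∈ U := fun y hy => hW y (W.support_bypass_subset_support hy)
  have hPpath := W.bypass_isPath
  generalize W.bypass = P at hP hPpath
  cases P with
  | nil => exact absurd rfl hx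
  | cons hvw P =>
    have hvP := ((Walk.cons_isPath_iff hvw P).1 hPpath).2
    refine ⟨_, hvw, P, fun y hy => ⟨?_, fun hyv => hvP (hyv ▸ hy)⟩⟩
    exact (reachableIn_of_mem_support _ hP (List.mem_cons_of_mem v hy)).1

end ReachableIn

variable {G}

/-- `c x` lists the ancestors of `x`, from its root, in a depth-first search forest of `G[U]`
whose roots lie in `S`. -/
structure IsDFSChains (G : SimpleGraph V) (U S : Set V) (c : V → List V) : Prop where
  exists_isPath : ∀ x ∈ U, ∃ s ∈ S, ∃ W : G.Walk s x, W.IsPath ∧ W.support = c x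
  subset : ∀ x ∈ U, ∀ y ∈ c x, y ∈ U
  isPrefix : ∀ x ∈ U, ∀ y ∈ c x, c y <+: c x
  comparable : ∀ x ∈ U, ∀ y ∈ U, G.Adj x y → x ∈ c y ∨ y ∈ c x

namespace IsDFSChains
variable {A B S : Set V} {c c₁ c₂ : V → List V}

theorem mono_roots {S' : Set V} (h : G.IsDFSChains A S c) (hS : S ⊆ S') :
    G.IsDFSChains A S' c where
  exists_isPath x hx := (h.exists_isPath x hx).imp fun _ ⟨hs, hW⟩ => ⟨hS hs, hW⟩
  subset := h.subset
  isPrefix := h.isPrefix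
  comparable := h.comparable

theorem cone [DecidableEq V] {v : V} (h : G.IsDFSChains A (G.neighborSet v) c) (hv : v ∉ A) :
    G.IsDFSChains (insert v A) {v} fun x => if x = v then [v] else v :: c x where
  exists_isPath x hx := by
    by_cases hxv : x = v
    · subst hxv
      exact ⟨x, rfl, .nil, .nil, by simp⟩
    · obtain ⟨s, hs : G.Adj v s, W, hW, hWc⟩ := h.exists_isPath x (hx.resolve_left hxv)
      refine ⟨v, rfl, .cons hs W, hW.cons fun hvW => hv (h.subset x ?_ v (hWc ▸ hvW)), ?_⟩
      · exact hx.resolve_left hxv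
      · rw [if_neg hxv, Walk.support_cons, hWc]
  subset x hx y hy := by
    by_cases hxv : x = v
    · simp_all
    · simp only [hxv, if_false, List.mem_cons] at hy
      exact hy.imp id (h.subset x (hx.resolve_left hxv) y)
  isPrefix x hx y hy := by
    by_cases hxv : x = v
    · simp_all
    · simp only [hxv, if_false, List.mem_cons] at hy
      rcases hy with rfl | hy
      · simp [hxv]
      · have hyA := h.subset x (hx.resolve_left hxv) y hy
        simpa [hxv, ne_of_mem_of_not_mem hyA hv] using h.isPrefix x (hx.resolve_left hxv) y hy
  comparable x hx y hy hxy := by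
    rcases hx with rfl | hx <;> rcases hy with rfl | hy
    · exact (G.irrefl hxy).elim
    · simp [ne_of_mem_of_not_mem hy hv]
    · simp [ne_of_mem_of_not_mem hx hv]
    · simpa [ne_of_mem_of_not_mem hx hv, ne_of_mem_of_not_mem hy hv] using
        h.comparable x hx y hy hxy

theorem union [DecidablePred (· ∈ B)] (h₁ : G.IsDFSChains A S c₁) (h₂ : G.IsDFSChains B S c₂)
    (hAB : Disjoint A B) (hadj : ∀ a ∈ A, ∀ b ∈ B, ¬ G.Adj a b) :
    G.IsDFSChains (A ∪ B) S fun x => if x ∈ B then c₂ x else c₁ x where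
  exists_isPath x hx := by
    by_cases hxB : x ∈ B
    · simpa [hxB] using h₂.exists_isPath x hxB
    · simpa [hxB] using h₁.exists_isPath x (hx.resolve_right hxB)
  subset x hx y hy := by
    by_cases hxB : x ∈ B
    · simp only [hxB, if_true] at hy
      exact Or.inr (h₂.subset x hxB y hy)
    · simp only [hxB, if_false] at hy
      exact Or.inl (h₁.subset x (hx.resolve_right hxB) y hy)
  isPrefix x hx y hy := by
    by_cases hxB : x ∈ B
    · simp only [hxB, if_true] at hy ⊢
      simpa [h₂.subset x hxB y hy] using h₂.isPrefix x hxB y hy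
    · simp only [hxB, if_false] at hy ⊢
      have hyA := h₁.subset x (hx.resolve_right hxB) y hy
      simpa [Set.disjoint_left.1 hAB hyA] using h₁.isPrefix x (hx.resolve_right hxB) y hy
  comparable x hx y hy hxy := by
    rcases hx with hx | hx <;> rcases hy with hy | hy
    · simpa [Set.disjoint_left.1 hAB hx, Set.disjoint_left.1 hAB hy] using
        h₁.comparable x hx y hy hxy
    · exact absurd hxy (hadj x hx y hy)
    · exact absurd hxy.symm (hadj y hy x hx)
    · simpa [hx, hy] using h₂.comparable x hx y hy hxy

end IsDFSChains

theorem pathGraph_isContained_pathGraph {m n : ℕ} (h : m ≤ n) : pathGraph m ⊑ pathGraph n :=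
  ⟨⟨⟨Fin.castLE h, fun hab => by simpa [pathGraph_adj] using hab⟩, Fin.castLE_injective h⟩⟩

theorem Walk.IsPath.length_lt_of_free {u v : V} {W : G.Walk u v} {k : ℕ} (hW : W.IsPath)
    (hfree : (pathGraph (k + 1)).Free G) : W.length < k :=
  lt_of_not_ge fun hk =>
    hfree ((pathGraph_isContained_pathGraph (by omega)).trans hW.isContained_pathGraph)

theorem isChain_ofFn_of_hom {k : ℕ} (f : pathGraph k →g G) : (List.ofFn f).IsChain G.Adj :=
  List.isChain_ofFn.2 fun _ _ => f.map_adj (by simp [pathGraph_adj])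

variable (G)

/-- Depth-first search: pick a root `v ∈ S`, recurse on the vertices reachable from `v` with the
neighbours of `v` as roots, and on the vertices not reachable from `v` with the roots `S`. -/
theorem exists_isDFSChains [Finite V] (U S : Set V)
    (hS : ∀ x ∈ U, ∃ s ∈ S, G.ReachableIn U s x) : ∃ c, G.IsDFSChains U S c := by
  classical
  induction U using WellFoundedLT.induction generalizing S with
  | ind U ih =>
  rcases U.eq_empty_or_nonempty with rfl | ⟨x, hx⟩
  · exact ⟨fun x => [x], by constructor <;> simp⟩
  obtain ⟨v, hvS, hvx⟩ := hS x hx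
  have hvU := hvx.mem_left
  set C := {y | G.ReachableIn U v y}
  have hCU : C ⊆ U := fun y hy => hy.mem_right
  have hvC : v ∈ C := ReachableIn.refl hvU
  obtain ⟨cA, hA⟩ := ih (C \ {v})
    ((Set.ssubset_iff_of_subset (Set.sdiff_subset.trans hCU)).2 ⟨v, hvU, fun h => h.2 rfl⟩)
    (G.neighborSet v) fun y hy => (hy.1.exists_adj_reachableIn_diff hy.2).imp
      fun _ ⟨hvw, hw⟩ => ⟨hvw, hw⟩
  obtain ⟨cB, hB⟩ := ih (U \ C) ((Set.ssubset_iff_of_subset Set.sdiff_subset).2 ⟨v, hvU,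
    fun h => h.2 hvC⟩) S fun y hy => (hS y hy.1).imp
      fun _ ⟨hs, hsy⟩ => ⟨hs, hsy.diff_of_not_reachableIn hy.2⟩
  have hC := (hA.cone fun h => h.2 rfl).mono_roots (Set.singleton_subset_iff.2 hvS)
  rw [Set.insert_sdiff_singleton, Set.insert_eq_of_mem hvC] at hC
  have hU := hC.union hB Set.disjoint_sdiff_right fun a ha b hb hab =>
    hb.2 (ha.trans (hab.reachableIn (hCU ha) hb.1))
  rw [Set.union_sdiff_cancel hCU] at hU
  exact ⟨_, hU⟩

end SimpleGraph

open SimpleGraph RootedForest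

section TreeDepth
variable {V : Type*} (G : SimpleGraph V)

theorem exists_supports_height_le [Finite V] (k : ℕ)
    (hk : ∀ u v (W : G.Walk u v), W.IsPath → W.length < k) :
    ∃ F : RootedForest V, F.Supports G ∧ F.height ≤ k := by
  obtain ⟨c, hc⟩ := G.exists_isDFSChains Set.univ Set.univ fun x _ =>
    ⟨x, trivial, ReachableIn.refl trivial⟩
  choose _ _ W hW hWc using fun x => hc.exists_isPath x trivial
  refine ⟨ofChains c (fun x => ?_) (fun x y => hc.isPrefix x trivial y),
    fun x y => hc.comparable x trivial y trivial, ciSup_le' fun x => ?_⟩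
  · rw [← hWc, List.getLast?_eq_some_getLast (W x).support_ne_nil, Walk.getLast_support]
  · calc (ofChains c _ _).vheight x ≤ (c x).length := vheight_ofChains_le c _ _ x
      _ = (W x).length + 1 := by rw [← hWc, Walk.length_support]
      _ ≤ k := hk _ _ _ (hW x)

theorem treeDepth_le_of_forall_isPath_length_lt [Finite V] (k : ℕ)
    (hk : ∀ u v (W : G.Walk u v), W.IsPath → W.length < k) : treeDepth G ≤ k :=
  Nat.sInf_le (exists_supports_height_le G k hk)

theorem exists_supports_height_le_treeDepth [Finite V] :
    ∃ F : RootedForest V, F.Supports G ∧ F.height ≤ treeDepth G := by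
  have := Fintype.ofFinite V
  exact Nat.sInf_mem (s := {n | ∃ F : RootedForest V, F.Supports G ∧ F.height ≤ n})
    ⟨_, exists_supports_height_le G _ fun _ _ _ hW => hW.length_lt⟩

theorem length_lt_two_pow_treeDepth [Finite V] {l : List V} (hl : l.Nodup)
    (hc : l.IsChain G.Adj) : l.length < 2 ^ treeDepth G := by
  obtain ⟨F, hFG, hF⟩ := exists_supports_height_le_treeDepth G
  exact (length_lt_two_pow_height hl (hc.imp hFG)).trans_le (Nat.pow_le_pow_right two_pos hF)

end TreeDepth

theorem treeDepth_bounds_of_longest_path {V : Type*} [Fintype V] (G : SimpleGraph V) (k : ℕ)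
    (h1 : ∃ f : SimpleGraph.pathGraph k →g G, Function.Injective f)
    (h2 : ¬ ∃ f : SimpleGraph.pathGraph (k + 1) →g G, Function.Injective f) :
    Nat.clog 2 (k + 1) ≤ treeDepth G ∧ treeDepth G ≤ (k + 2).choose 2 - 1 := by
  obtain ⟨f, hf⟩ := h1
  have hfree : (pathGraph (k + 1)).Free G := fun ⟨e⟩ => h2 ⟨e.toHom, e.injective⟩
  constructor
  · refine Nat.clog_le_of_le_pow ?_
    simpa using length_lt_two_pow_treeDepth G (List.nodup_ofFn.2 hf) (isChain_ofFn_of_hom f)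
  · calc treeDepth G ≤ k :=
        treeDepth_le_of_forall_isPath_length_lt G k fun _ _ _ hW => hW.length_lt_of_free hfree
      _ ≤ (k + 2).choose 2 - 1 := by
        rw [Nat.choose_succ_succ, Nat.choose_one_right]
        omega
end

section
/- If a connected graph G has a centered coloring using p colors, then G has tree-depth at most p. Moreover, a rooted forest F of height at most p with G ⊆ clos(F) can be constructed by repeatedly removing, in each connected component, a vertex whose color appears exactly once in that component. -/
/-- A centered coloring: every nonempty connected (induced) subgraph has a color
appearing exactly once. -/
def IsCenteredColoring {V α : Type*} (G : SimpleGraph V) (c : V → α) : Prop :=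
  ∀ S : Set V, S.Nonempty → (G.induce S).Connected → ∃ a : α, ∃! v : S, c ↑v = a

open SimpleGraph

namespace RootedForest

variable {V : Type*}

def ancestors (F : RootedForest V) (x : V) : Set V := {y | F.le y x}

theorem height_le_of_encard_ancestors_le {F : RootedForest V} {n : ℕ}
    (h : ∀ x, (F.ancestors x).encard ≤ n) : F.height ≤ n :=
  ciSup_le' fun x => (Set.encard_le_coe_iff_finite_ncard_le.mp (h x)).2

def discrete (V : Type*) : RootedForest V where
  le := Eq
  le_refl _ := rfl
  le_antisymm _ _ h _ := h
  le_trans _ _ _ := Eq.trans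
  anc_chain _ _ _ h h' := .inl (h.trans h'.symm)

/-- The disjoint union of forests on the fibres of `f`. -/
def glue {ι : Type*} (f : V → ι) (F : ∀ i, RootedForest {v | f v = i}) : RootedForest V where
  le u v := ∃ (i : ι) (hu : f u = i) (hv : f v = i), (F i).le ⟨u, hu⟩ ⟨v, hv⟩
  le_refl v := ⟨f v, rfl, rfl, (F _).le_refl _⟩
  le_antisymm := by
    rintro u v ⟨_, _, rfl, h⟩ ⟨_, rfl, _, h'⟩
    exact congrArg Subtype.val ((F _).le_antisymm _ _ h h')
  le_trans := by
    rintro u v w ⟨_, hu, rfl, h⟩ ⟨_, rfl, hw, h'⟩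
    exact ⟨_, hu, hw, (F _).le_trans _ _ _ h h'⟩
  anc_chain := by
    rintro u v w ⟨_, hu, rfl, h⟩ ⟨_, hv, rfl, h'⟩
    exact ((F _).anc_chain _ _ _ h h').imp (fun h => ⟨_, hu, hv, h⟩) fun h => ⟨_, hv, hu, h⟩

theorem ancestors_glue {ι : Type*} (f : V → ι) (F : ∀ i, RootedForest {v | f v = i}) (x : V) :
    (glue f F).ancestors x = Subtype.val '' (F (f x)).ancestors ⟨x, rfl⟩ := by
  ext y
  constructor
  · rintro ⟨_, hy, rfl, h⟩
    exact ⟨⟨y, hy⟩, h, rfl⟩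
  · rintro ⟨⟨y, hy⟩, h, rfl⟩
    exact ⟨_, hy, rfl, h⟩

theorem supports_glue {ι : Type*} {G : SimpleGraph V} {f : V → ι}
    {F : ∀ i, RootedForest {v | f v = i}} (hf : ∀ u v, G.Adj u v → f u = f v)
    (hF : ∀ i, (F i).Supports (G.induce {v | f v = i})) : (glue f F).Supports G := by
  intro u v huv
  have hv : f v = f u := (hf u v huv).symm
  exact (hF (f u) ⟨u, rfl⟩ ⟨v, hv⟩ huv).imp
    (fun h => ⟨_, rfl, hv, h⟩) fun h => ⟨_, hv, rfl, h⟩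

def addRoot (r : V) (F : RootedForest {v | v ≠ r}) : RootedForest V where
  le u v := u = r ∨ ∃ (hu : u ≠ r) (hv : v ≠ r), F.le ⟨u, hu⟩ ⟨v, hv⟩
  le_refl v := by
    by_cases hv : v = r
    · exact .inl hv
    · exact .inr ⟨hv, hv, F.le_refl _⟩
  le_antisymm := by
    rintro u v (rfl | ⟨hu, hv, h⟩) (rfl | ⟨hv', hu', h'⟩)
    · rfl
    · exact absurd rfl hu'
    · exact absurd rfl hv
    · exact congrArg Subtype.val (F.le_antisymm _ _ h h')
  le_trans := by
    rintro u v w (rfl | ⟨hu, hv, h⟩) (rfl | ⟨_, hw, h'⟩)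
    · exact .inl rfl
    · exact .inl rfl
    · exact absurd rfl hv
    · exact .inr ⟨hu, hw, F.le_trans _ _ _ h h'⟩
  anc_chain := by
    rintro u v w (rfl | ⟨hu, hw, h⟩) (rfl | ⟨hv, _, h'⟩)
    · exact .inl (.inl rfl)
    · exact .inl (.inl rfl)
    · exact .inr (.inl rfl)
    · exact (F.anc_chain _ _ _ h h').imp
        (fun h => .inr ⟨hu, hv, h⟩) fun h => .inr ⟨hv, hu, h⟩

theorem ancestors_addRoot_self (r : V) (F : RootedForest {v | v ≠ r}) :
    (addRoot r F).ancestors r = {r} := by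
  ext y
  constructor
  · rintro (rfl | ⟨_, hr, _⟩)
    · rfl
    · exact absurd rfl hr
  · rintro rfl
    exact .inl rfl

theorem ancestors_addRoot_of_ne {r x : V} (F : RootedForest {v | v ≠ r}) (hx : x ≠ r) :
    (addRoot r F).ancestors x = insert r (Subtype.val '' F.ancestors ⟨x, hx⟩) := by
  ext y
  constructor
  · rintro (rfl | ⟨hy, _, h⟩)
    · exact .inl rfl
    · exact .inr ⟨⟨y, hy⟩, h, rfl⟩
  · rintro (rfl | ⟨⟨y, hy⟩, h, rfl⟩)
    · exact .inl rfl
    · exact .inr ⟨hy, hx, h⟩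

theorem supports_addRoot {G : SimpleGraph V} {r : V} {F : RootedForest {v | v ≠ r}}
    (hF : F.Supports (G.induce {v | v ≠ r})) : (addRoot r F).Supports G := by
  intro u v huv
  by_cases hu : u = r
  · exact .inl (.inl hu)
  by_cases hv : v = r
  · exact .inr (.inl hv)
  exact (hF ⟨u, hu⟩ ⟨v, hv⟩ huv).imp
    (fun h => .inr ⟨hu, hv, h⟩) fun h => .inr ⟨hv, hu, h⟩

end RootedForest

theorem Set.encard_range_restrict_ne_add_one_le {V α : Type*} {c : V → α} {r : V}
    (hr : ∀ v, c v = c r → v = r) :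
    (Set.range fun v : {v | v ≠ r} => c v).encard + 1 ≤ (Set.range c).encard :=
  calc (Set.range fun v : {v | v ≠ r} => c v).encard + 1
      ≤ (Set.range c \ {c r}).encard + 1 := by
        gcongr
        rintro _ ⟨v, rfl⟩
        exact ⟨⟨v, rfl⟩, fun h => v.2 (hr v h)⟩
    _ = (Set.range c).encard := Set.encard_sdiff_singleton_add_one ⟨r, rfl⟩

theorem IsCenteredColoring.comp_embedding {V W α : Type*} {G : SimpleGraph V}
    {H : SimpleGraph W} {c : V → α} (hc : IsCenteredColoring G c) (φ : H ↪g G) :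
    IsCenteredColoring H (c ∘ φ) := by
  intro S hS hconn
  have hconn' : (G.induce (φ '' S)).Connected := by
    refine hconn.map (induceHom φ.toHom (Set.mapsTo_image φ S)) ?_
    rintro ⟨_, v, hv, rfl⟩
    exact ⟨⟨v, hv⟩, rfl⟩
  obtain ⟨a, ⟨_, v, hv, rfl⟩, hva, huniq⟩ := hc (φ '' S) (hS.image φ) hconn'
  refine ⟨a, ⟨v, hv⟩, hva, fun w hw => Subtype.ext (φ.injective ?_)⟩
  exact congrArg Subtype.val (huniq ⟨φ w, w, w.2, rfl⟩ hw)

universe u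

namespace SimpleGraph

variable {V : Type*}

/-- Ancestors are counted with `encard`: the `Nat.card` of `RootedForest.vheight` would send
infinite ancestor sets to `0`. -/
def TreeDepthLE (G : SimpleGraph V) (n : ℕ) : Prop :=
  ∃ F : RootedForest V, F.Supports G ∧ ∀ x, (F.ancestors x).encard ≤ n

theorem treeDepthLE_zero [IsEmpty V] (G : SimpleGraph V) : G.TreeDepthLE 0 :=
  ⟨RootedForest.discrete V, fun u => isEmptyElim u, fun x => isEmptyElim x⟩

theorem TreeDepthLE.of_connectedComponent {G : SimpleGraph V} {n : ℕ}
    (h : ∀ K : G.ConnectedComponent, (G.induce K.supp).TreeDepthLE n) : G.TreeDepthLE n := by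
  choose F hF hFn using h
  refine ⟨RootedForest.glue G.connectedComponentMk F,
    RootedForest.supports_glue (fun _ _ => ConnectedComponent.connectedComponentMk_eq_of_adj) hF,
    fun x => ?_⟩
  refine (congrArg Set.encard (RootedForest.ancestors_glue _ F x)).trans_le ?_
  rw [Subtype.val_injective.encard_image]
  exact hFn _ _

theorem TreeDepthLE.succ_of_induce_ne {G : SimpleGraph V} {n : ℕ} (r : V)
    (h : (G.induce {v | v ≠ r}).TreeDepthLE n) : G.TreeDepthLE (n + 1) := by
  obtain ⟨F, hF, hFn⟩ := h
  refine ⟨F.addRoot r, RootedForest.supports_addRoot hF, fun x => ?_⟩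
  push_cast
  by_cases hx : x = r
  · rw [hx, RootedForest.ancestors_addRoot_self, Set.encard_singleton]
    exact le_add_self
  · rw [RootedForest.ancestors_addRoot_of_ne F hx, Set.encard_insert_of_notMem,
      Subtype.val_injective.encard_image]
    · gcongr
      exact hFn _
    · rintro ⟨z, -, hz⟩
      exact z.2 hz

theorem treeDepthLE_of_isCenteredColoring {α : Type*} (n : ℕ) :
    ∀ {V : Type u} (G : SimpleGraph V) (c : V → α), IsCenteredColoring G c →
      (Set.range c).encard ≤ n → G.TreeDepthLE n := by
  induction n with
  | zero =>
    intro V G c _ hn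
    have : IsEmpty V :=
      Set.range_eq_empty_iff.mp (Set.encard_eq_zero.mp (nonpos_iff_eq_zero.mp hn))
    exact treeDepthLE_zero G
  | succ n ih =>
    intro V G c hc hn
    refine TreeDepthLE.of_connectedComponent fun K => ?_
    obtain ⟨_, r, rfl, hr⟩ := hc K.supp ⟨K.out, K.out_eq⟩ K.connected_toSimpleGraph
    have hcK := hc.comp_embedding (Embedding.induce K.supp)
    refine TreeDepthLE.succ_of_induce_ne r (ih _ _ (hcK.comp_embedding (Embedding.induce _)) ?_)
    have hcolors := (Set.encard_range_restrict_ne_add_one_le (c := c ∘ Subtype.val) hr).trans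
      ((Set.encard_le_encard (Set.range_comp_subset_range _ _)).trans hn)
    push_cast at hcolors
    exact (ENat.add_le_add_iff_right ENat.one_ne_top).mp hcolors

end SimpleGraph

theorem treeDepth_le_of_centered_coloring_general
    {V : Type*} (G : SimpleGraph V) (p : ℕ)
    (c : V → Fin p) (hc : IsCenteredColoring G c) :
    treeDepth G ≤ p ∧
    ∃ F : RootedForest V, RootedForest.Supports G F ∧ F.height ≤ p := by
  have hcolors : (Set.range c).encard ≤ p := by simpa using Set.encard_le_card (s := Set.range c)
  obtain ⟨F, hF, hFp⟩ := G.treeDepthLE_of_isCenteredColoring p c hc hcolors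
  have hheight := RootedForest.height_le_of_encard_ancestors_le hFp
  exact ⟨Nat.sInf_le ⟨F, hF, hheight⟩, F, hF, hheight⟩

theorem treeDepth_le_of_centered_coloring
    {V : Type*} [Fintype V] (G : SimpleGraph V) (hG : G.Connected) (p : ℕ)
    (c : V → Fin p) (hc : IsCenteredColoring G c) :
    treeDepth G ≤ p ∧
    ∃ F : RootedForest V, RootedForest.Supports G F ∧ F.height ≤ p :=
  treeDepth_le_of_centered_coloring_general G p c hc
end
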